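/- Let n ≥ 1, let l_1,…,l_n, θ_1,…,θ_n, L be real numbers, let f_1,…,f_n be invertible 2×2 real matrices satisfying f_i⁻¹ D f_i = A(l_i, θ_i) for each i, and define T : ℝ → ℝ by T(z) = Tr( (f_1⁻¹ S(z) f_1)⋯(f_n⁻¹ S(z) f_n)·γ_L ). Then the first derivative of T at 0 equals sinh(L/2) · Σ_{i=1}^n cos θ_i. -/

import Mathlib

open Finset

/-- The matrix `A(l,θ) = [[cos θ, −e^l sin θ], [−e^{−l} sin θ, −cos θ]]`. -/
noncomputable def Amat (l θ : ℝ) : Matrix (Fin 2) (Fin 2) ℝ :=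
  !![Real.cos θ, -Real.exp l * Real.sin θ; -Real.exp (-l) * Real.sin θ, -Real.cos θ]

/-- The matrix `γ_L = diag(e^{L/2}, e^{−L/2})`. -/
noncomputable def gammaMat (L : ℝ) : Matrix (Fin 2) (Fin 2) ℝ :=
  !![Real.exp (L / 2), 0; 0, Real.exp (-(L / 2))]

/-- The matrix `S(z) = diag(e^{z/2}, e^{−z/2})`. -/
noncomputable def Smat (z : ℝ) : Matrix (Fin 2) (Fin 2) ℝ :=
  !![Real.exp (z / 2), 0; 0, Real.exp (-(z / 2))]

/-- The matrix `D = diag(1, −1)`. -/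
def Dmat : Matrix (Fin 2) (Fin 2) ℝ := !![1, 0; 0, -1]

/-- Alternating length `L_I = Σ_{j=1}^k (−1)^j l_{i_j}` for `I = {i_1 < ⋯ < i_k}`. -/
def altLen {r : ℕ} (l : Fin r → ℝ) (I : Finset (Fin r)) : ℝ :=
  let s := (I.sort (· ≤ ·)).map l
  ∑ j ∈ Finset.range s.length, (-1 : ℝ) ^ (j + 1) * s.getD j 0

/-- Signature `s(I) = (i_2−i_1+1) + (i_4−i_3+1) + ⋯ + (i_k−i_{k−1}+1)` for `I` of even
cardinality, with `s(∅) = 0`. -/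
def sig {r : ℕ} (I : Finset (Fin r)) : ℕ :=
  let s := (I.sort (· ≤ ·)).map Fin.val
  ∑ m ∈ Finset.range (s.length / 2), (s.getD (2 * m + 1) 0 - s.getD (2 * m) 0 + 1)

/-- `P(k,n)`: the set of `n`-tuples of nonnegative integers summing to `k`. -/
def Pkn (k n : ℕ) : Finset (Fin n → ℕ) := Finset.Nat.antidiagonalTuple n k

/-- `B_{n,k,r}`: sum of multinomial coefficients `(k choose q)` over `q ∈ P(k,n)` whose
first `r` entries are odd and remaining entries are even. -/
def Bnkr (n k r : ℕ) : ℕ :=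
  ∑ q ∈ (Pkn k n).filter
      (fun q => ∀ i : Fin n, ((i : ℕ) < r → Odd (q i)) ∧ (r ≤ (i : ℕ) → Even (q i))),
    Nat.multinomial Finset.univ q

/-! Since `S(z) = cosh(z/2) • 1 + sinh(z/2) • D`, each factor `fᵢ⁻¹ S(z) fᵢ` is a curve through `1`
with velocity `A(lᵢ, θᵢ) / 2` at `z = 0`. By the Leibniz rule a product of curves through `1` has
velocity the sum of their velocities, and the trace is linear, so
`T'(0) = ½ Σᵢ Tr (A(lᵢ, θᵢ) γ_L) = sinh(L/2) Σᵢ cos θᵢ`. -/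

-- `Matrix` carries no global norm; on a finite-dimensional space any choice gives the same
-- derivatives.
attribute [local instance] Matrix.linftyOpNormedAddCommGroup Matrix.linftyOpNormedSpace
  Matrix.linftyOpNormedRing Matrix.linftyOpNormedAlgebra

theorem HasDerivAt.list_prod_ofFn_of_eq_one {𝕜 𝔸 : Type*} [NontriviallyNormedField 𝕜]
    [NormedRing 𝔸] [NormedAlgebra 𝕜 𝔸] {n : ℕ} {g : Fin n → 𝕜 → 𝔸} {g' : Fin n → 𝔸} {x : 𝕜}
    (hg : ∀ i, HasDerivAt (g i) (g' i) x) (hg_one : ∀ i, g i x = 1) :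
    HasDerivAt (fun z => (List.ofFn fun i => g i z).prod) (∑ i, g' i) x := by
  induction n with
  | zero => simpa using hasDerivAt_const x (1 : 𝔸)
  | succ n ih =>
    have htail := ih (fun i => hg i.succ) (fun i => hg_one i.succ)
    have htail_one : (List.ofFn fun i : Fin n => g i.succ x).prod = 1 := by
      simp [hg_one]
    simpa [List.ofFn_succ, Fin.sum_univ_succ, htail_one, hg_one 0] using (hg 0).fun_mul htail

theorem HasDerivAt.matrix_trace {𝕜 : Type*} [NontriviallyNormedField 𝕜] [CompleteSpace 𝕜]
    {m : Type*} [Fintype m] {M : 𝕜 → Matrix m m 𝕜} {M' : Matrix m m 𝕜} {x : 𝕜}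
    (hM : HasDerivAt M M' x) : HasDerivAt (fun z => (M z).trace) M'.trace x :=
  (Matrix.traceLinearMap m 𝕜 𝕜).toContinuousLinearMap.hasFDerivAt.comp_hasDerivAt x hM

theorem Smat_eq_cosh_smul_one_add_sinh_smul_Dmat (z : ℝ) :
    Smat z = Real.cosh (z / 2) • (1 : Matrix (Fin 2) (Fin 2) ℝ) + Real.sinh (z / 2) • Dmat := by
  ext i j
  fin_cases i <;> fin_cases j <;>
    simp [Smat, Dmat, Real.cosh_eq, Real.sinh_eq] <;> ring

@[simp]
theorem Smat_zero : Smat 0 = 1 := by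
  simp [Smat_eq_cosh_smul_one_add_sinh_smul_Dmat]

theorem hasDerivAt_Smat (z : ℝ) : HasDerivAt Smat ((1 / 2 : ℝ) • (Smat z * Dmat)) z := by
  have hcosh := ((Real.hasDerivAt_cosh _).comp z ((hasDerivAt_id z).div_const 2))
  have hsinh := ((Real.hasDerivAt_sinh _).comp z ((hasDerivAt_id z).div_const 2))
  rw [funext Smat_eq_cosh_smul_one_add_sinh_smul_Dmat]
  refine ((hcosh.smul_const (1 : Matrix (Fin 2) (Fin 2) ℝ)).add
    (hsinh.smul_const Dmat)).congr_deriv ?_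
  ext i j
  fin_cases i <;> fin_cases j <;>
    simp [Dmat, Matrix.one_fin_two, Real.cosh_eq, Real.sinh_eq] <;> ring

theorem trace_Amat_mul_gammaMat (l θ L : ℝ) :
    (Amat l θ * gammaMat L).trace = 2 * Real.sinh (L / 2) * Real.cos θ := by
  simp [Amat, gammaMat, Matrix.trace_fin_two, Real.sinh_eq]
  ring

theorem deriv_trace_eq_general (n : ℕ) (l θ : Fin n → ℝ) (L : ℝ)
    (f : Fin n → Matrix (Fin 2) (Fin 2) ℝ) (hf : ∀ i, IsUnit (f i))
    (hA : ∀ i, (f i)⁻¹ * Dmat * f i = Amat (l i) (θ i)) :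
    deriv
      (fun z : ℝ =>
        Matrix.trace
          ((List.ofFn fun i : Fin n => (f i)⁻¹ * Smat z * f i).prod * gammaMat L)) 0 =
    Real.sinh (L / 2) * ∑ i, Real.cos (θ i) := by
  have hconj (i : Fin n) : HasDerivAt (fun z => (f i)⁻¹ * Smat z * f i)
      ((1 / 2 : ℝ) • Amat (l i) (θ i)) 0 := by
    have h := ((hasDerivAt_Smat 0).const_mul (f i)⁻¹).mul_const (f i)
    rwa [Smat_zero, Matrix.one_mul, Matrix.mul_smul, Matrix.smul_mul, hA i] at h
  have hconj_one (i : Fin n) : (f i)⁻¹ * Smat 0 * f i = 1 := by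
    simpa using Matrix.nonsing_inv_mul _ ((f i).isUnit_iff_isUnit_det.mp (hf i))
  rw [(((HasDerivAt.list_prod_ofFn_of_eq_one hconj hconj_one).mul_const
    (gammaMat L)).matrix_trace).deriv, Finset.sum_mul, Matrix.trace_sum, Finset.mul_sum]
  refine Finset.sum_congr rfl fun i _ => ?_
  rw [Matrix.smul_mul, Matrix.trace_smul, trace_Amat_mul_gammaMat, smul_eq_mul]
  ring

/-- first derivative of `T` at `0` equals `sinh(L/2)·Σ cos θᵢ`. -/
theorem deriv_trace_eq (n : ℕ) (hn : 1 ≤ n) (l θ : Fin n → ℝ) (L : ℝ)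
    (f : Fin n → Matrix (Fin 2) (Fin 2) ℝ) (hf : ∀ i, IsUnit (f i))
    (hA : ∀ i, (f i)⁻¹ * Dmat * f i = Amat (l i) (θ i)) :
    deriv
      (fun z : ℝ =>
        Matrix.trace
          ((List.ofFn fun i : Fin n => (f i)⁻¹ * Smat z * f i).prod * gammaMat L)) 0 =
    Real.sinh (L / 2) * ∑ i, Real.cos (θ i) :=
  deriv_trace_eq_general n l θ L f hf hA
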